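/- A topological orthoalgebra L is stably ordered if and only if for every pair of open sets U, V ⊆ L, the set U ⊕ V = {a ⊕ b : a ∈ U, b ∈ V, a ⊥ b} is open. -/
import Mathlib


/-- An orthoalgebra: a partial commutative, associative operation `oplus`
(defined on the relation `perp`), with unique orthocomplements, in which
`a ⊥ a` forces `a = 0`. -/
structure Orthoalgebra (L : Type*) where
  perp : L → L → Prop
  oplus : L → L → L
  compl : L → L
  zero : L
  one : L
  perp_comm : ∀ a b, perp a b → perp b a
  oplus_comm : ∀ a b, perp a b → oplus a b = oplus b a
  assoc : ∀ a b c, perp b c → perp a (oplus b c) →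
    perp a b ∧ perp (oplus a b) c ∧ oplus a (oplus b c) = oplus (oplus a b) c
  perp_compl : ∀ a, perp a (compl a)
  oplus_compl : ∀ a, oplus a (compl a) = one
  compl_unique : ∀ a b, perp a b → oplus a b = one → b = compl a
  perp_self_eq_zero : ∀ a, perp a a → a = zero
  zero_def : compl one = zero

/-- The induced order: `a ≤ b` iff `a ⊥ b'`. -/
def Orthoalgebra.le {L : Type*} (A : Orthoalgebra L) (a b : L) : Prop :=
  A.perp a (A.compl b)

/-- The partial difference `b ⊖ a = (a ⊕ b')'` (the unique `c` with `b = a ⊕ c` when `a ≤ b`). -/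
def Orthoalgebra.ominus {L : Type*} (A : Orthoalgebra L) (b a : L) : L :=
  A.compl (A.oplus a (A.compl b))

/-- A topological orthoalgebra: `⊥` is closed, `⊕` is continuous on `⊥`,
and `'` is continuous. -/
structure IsTOA {L : Type*} [TopologicalSpace L] (A : Orthoalgebra L) : Prop where
  closed_perp : IsClosed {p : L × L | A.perp p.1 p.2}
  cont_oplus : ContinuousOn (fun p : L × L => A.oplus p.1 p.2) {p : L × L | A.perp p.1 p.2}
  cont_compl : Continuous A.compl

/-- Compatibility: `a` and `b` admit a Mackey decomposition. -/
def Orthoalgebra.Compat {L : Type*} (A : Orthoalgebra L) (a b : L) : Prop :=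
  ∃ c, A.le c a ∧ A.le c b ∧ A.perp a (A.ominus b c)

/-- An atom: a minimal nonzero element. -/
def Orthoalgebra.IsAtom' {L : Type*} (A : Orthoalgebra L) (a : L) : Prop :=
  a ≠ A.zero ∧ ∀ b, A.le b a → b = A.zero ∨ b = a

namespace Orthoalgebra

variable {L : Type*} (A : Orthoalgebra L)

lemma coassoc {a b c : L} (hab : A.perp a b) (hc : A.perp (A.oplus a b) c) :
    A.perp b c ∧ A.perp a (A.oplus b c) ∧
      A.oplus a (A.oplus b c) = A.oplus (A.oplus a b) c := by
  obtain ⟨h1, h2, h3⟩ := A.assoc c a b hab (A.perp_comm _ _ hc)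
  obtain ⟨h4, h5, h6⟩ := A.assoc b c a h1 (A.perp_comm _ _ h2)
  refine ⟨h4, A.perp_comm _ _ h5, ?_⟩
  calc A.oplus a (A.oplus b c) = A.oplus (A.oplus b c) a :=
        A.oplus_comm _ _ (A.perp_comm _ _ h5)
    _ = A.oplus b (A.oplus c a) := h6.symm
    _ = A.oplus (A.oplus c a) b := A.oplus_comm _ _ (A.perp_comm _ _ h2)
    _ = A.oplus c (A.oplus a b) := h3.symm
    _ = A.oplus (A.oplus a b) c := (A.oplus_comm _ _ hc).symm

lemma compl_compl (c : L) : A.compl (A.compl c) = c := by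
  have h := A.compl_unique (A.compl c) c (A.perp_comm _ _ (A.perp_compl c))
    (by rw [A.oplus_comm _ _ (A.perp_comm _ _ (A.perp_compl c))]; exact A.oplus_compl c)
  exact h.symm

lemma le_oplus {a b : L} (hab : A.perp a b) :
    A.le a (A.oplus a b) ∧ A.ominus (A.oplus a b) a = b := by
  set s := A.oplus a b with hs
  have hba : A.perp b a := A.perp_comm _ _ hab
  have hss : A.perp (A.oplus b a) (A.compl s) := by
    rw [A.oplus_comm _ _ hba]; exact A.perp_compl s
  obtain ⟨h1, h2, h3⟩ := A.coassoc hba hss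
  refine ⟨h1, ?_⟩
  have h4 : A.oplus b (A.oplus a (A.compl s)) = A.one := by
    rw [h3, A.oplus_comm _ _ hba]; exact A.oplus_compl s
  have h5 := A.compl_unique (A.oplus a (A.compl s)) b (A.perp_comm _ _ h2)
    (by rw [A.oplus_comm _ _ (A.perp_comm _ _ h2)]; exact h4)
  exact h5.symm

lemma ominus_spec {a c : L} (h : A.le a c) :
    A.perp a (A.ominus c a) ∧ A.oplus a (A.ominus c a) = c := by
  set t := A.oplus a (A.compl c) with ht
  have hca : A.perp (A.compl c) a := A.perp_comm _ _ h
  have htt : A.perp (A.oplus (A.compl c) a) (A.compl t) := by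
    rw [A.oplus_comm _ _ hca]; exact A.perp_compl t
  obtain ⟨h1, h2, h3⟩ := A.coassoc hca htt
  refine ⟨h1, ?_⟩
  have h4 : A.oplus (A.compl c) (A.oplus a (A.compl t)) = A.one := by
    rw [h3, A.oplus_comm _ _ hca]; exact A.oplus_compl t
  have h5 := A.compl_unique (A.compl c) (A.oplus a (A.compl t)) h2 h4
  rw [show A.ominus c a = A.compl t from rfl]
  rw [h5, A.compl_compl]

end Orthoalgebra


theorem stably_ordered_iff {L : Type*} [TopologicalSpace L] (A : Orthoalgebra L)
    (hA : IsTOA A) :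
    (∀ U : Set L, IsOpen U → IsOpen {b : L | ∃ a ∈ U, A.le a b}) ↔
    (∀ U V : Set L, IsOpen U → IsOpen V →
      IsOpen {c : L | ∃ a ∈ U, ∃ b ∈ V, A.perp a b ∧ c = A.oplus a b}) := by
  constructor
  · intro hstab U V hU hV
    -- `W` is the graph of `≤`, a closed set
    set W : Set (L × L) := {p : L × L | A.perp p.1 (A.compl p.2)} with hW
    set g : L × L → L := fun p => A.ominus p.2 p.1 with hg
    have hgc : ContinuousOn g W := by
      have hcont : Continuous (fun p : L × L => (p.1, A.compl p.2)) :=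
        continuous_fst.prodMk (hA.cont_compl.comp continuous_snd)
      have hmap : Set.MapsTo (fun p : L × L => (p.1, A.compl p.2)) W
          {p : L × L | A.perp p.1 p.2} := fun p hp => hp
      have h1 : ContinuousOn (fun p : L × L => A.oplus p.1 (A.compl p.2)) W :=
        hA.cont_oplus.comp hcont.continuousOn hmap
      exact hA.cont_compl.comp_continuousOn h1
    obtain ⟨u, hu, huW⟩ := (continuousOn_iff'.mp hgc) V hV
    rw [isOpen_iff_forall_mem_open]
    rintro c ⟨a, haU, b, hbV, hab, rfl⟩
    obtain ⟨hle, hom⟩ := A.le_oplus hab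
    have hacW : (a, A.oplus a b) ∈ W := hle
    have hacu : (a, A.oplus a b) ∈ u ∩ U ×ˢ (Set.univ : Set L) := by
      constructor
      · have : (a, A.oplus a b) ∈ g ⁻¹' V ∩ W := ⟨by simpa [hg, hom] using hbV, hacW⟩
        rw [huW] at this; exact this.1
      · exact ⟨haU, trivial⟩
    obtain ⟨U₁, U₂, hU₁, hU₂, haU₁, hcU₂, hsub⟩ :=
      isOpen_prod_iff.mp (hu.inter (hU.prod isOpen_univ)) a (A.oplus a b) hacu
    refine ⟨{b' : L | ∃ a' ∈ U₁, A.le a' b'} ∩ U₂, ?_, (hstab U₁ hU₁).inter hU₂, ?_⟩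
    · rintro c' ⟨⟨a', ha'U₁, hle'⟩, hc'U₂⟩
      have hmem : (a', c') ∈ u ∩ U ×ˢ (Set.univ : Set L) := hsub ⟨ha'U₁, hc'U₂⟩
      have hWc : (a', c') ∈ W := hle'
      have hgV : g (a', c') ∈ V := by
        have : (a', c') ∈ g ⁻¹' V ∩ W := by rw [huW]; exact ⟨hmem.1, hWc⟩
        exact this.1
      obtain ⟨hperp, heq⟩ := A.ominus_spec hle'
      exact ⟨a', hmem.2.1, A.ominus c' a', hgV, hperp, heq.symm⟩
    · exact ⟨⟨a, haU₁, hle⟩, hcU₂⟩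
  · intro hop U hU
    have := hop U Set.univ hU isOpen_univ
    convert this using 1
    ext c
    constructor
    · rintro ⟨a, haU, hle⟩
      obtain ⟨hperp, heq⟩ := A.ominus_spec hle
      exact ⟨a, haU, A.ominus c a, trivial, hperp, heq.symm⟩
    · rintro ⟨a, haU, b, -, hab, rfl⟩
      exact ⟨a, haU, (A.le_oplus hab).1⟩
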